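/- Let a > 0 and let (u(s), v(s)) solve the system (S) on some interval (0, s₀] with initial data u(0)=0, v(0)=a, u'(0)=1, v'(0)=0 (and u, v ∈ C²([0,s₀]), u'² + v'² = 1). Then the integrand t ↦ e^{-(u(t)² + v(t)²)/2} u'(t)v'(t)/u(t) extends continuously to t = 0, and for all s ∈ (0, s₀] the curvature k = -v'u'' + u'v'' satisfies k(s) = φ(s) e^{(u(s)² + v(s)²)/2} / u(s), where φ(s) := ∫₀ˢ e^{-(u(t)² + v(t)²)/2} u'(t)v'(t)/u(t) dt. -/

import Mathlib

/-!
Along (S) the curvature is `k = (u - 1/u) v' - u' v`, and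
`Φ = u k e^{-(u² + v²)/2} = ((u² - 1) v' - u u' v) e^{-(u² + v²)/2}` is `C¹` on `[0, s₀]`, vanishes
at `0`, and has derivative `e^{-(u² + v²)/2} u' v' / u` wherever `u ≠ 0`. Hence `Φ'` is the
continuous extension of the integrand and `φ = Φ`, which is the curvature formula, as soon as
`u > 0` on `(0, s₀]`.

It remains to see `u > 0` on `(0, s₀]`; it holds right after `0` since `u'(0) = 1`. At a first
zero `s₁` of `u`, the `u`-equation multiplied by `u` gives `v'(s₁) = 0`, so `u'(s₁) = -1`. The
`v`-equation multiplied by `u / (s - s₁)` gives `2 v''(s₁) = -v(s₁)` in the limit, while (S) read at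
`s₁` itself, where `1 / u = 0` by convention, gives `v''(s₁) = -v(s₁)`; so `v(s₁) = v'(s₁) = 0`.
Now `v` solves the linear equation `v'' = u'(u - 1/u) v' - u'² v`, whose coefficient `u'(u - 1/u)`
is bounded below on every `[δ, s₁]`, `δ > 0` (it is positive near `s₁`). A backward Grönwall
estimate for `v² + v'²` then gives `v = 0` on `[δ, s₁]`, contradicting `v(0) = a > 0` for small `δ`.
-/

open Set

/-- First derivative within `[0, s₀]`. -/
noncomputable def d1 (s₀ : ℝ) (f : ℝ → ℝ) : ℝ → ℝ := derivWithin f (Icc 0 s₀)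

/-- Second derivative within `[0, s₀]`. -/
noncomputable def d2 (s₀ : ℝ) (f : ℝ → ℝ) : ℝ → ℝ := derivWithin (d1 s₀ f) (Icc 0 s₀)

/-- `(u, v)` is a `C²([0, s₀])`, arclength-parametrized solution of the system (S)
`u'' = -v'²(u - 1/u) + u'v'v`, `v'' = v'u'(u - 1/u) - u'²v` on `(0, s₀]`,
with initial data `u(0) = 0`, `v(0) = a`, `u'(0) = 1`, `v'(0) = 0`. -/
def IsSolS (a s₀ : ℝ) (u v : ℝ → ℝ) : Prop :=
  ContDiffOn ℝ 2 u (Icc 0 s₀) ∧ ContDiffOn ℝ 2 v (Icc 0 s₀) ∧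
  u 0 = 0 ∧ v 0 = a ∧ d1 s₀ u 0 = 1 ∧ d1 s₀ v 0 = 0 ∧
  (∀ s ∈ Icc (0:ℝ) s₀, (d1 s₀ u s) ^ 2 + (d1 s₀ v s) ^ 2 = 1) ∧
  (∀ s ∈ Ioc (0:ℝ) s₀,
    d2 s₀ u s = -(d1 s₀ v s) ^ 2 * (u s - 1 / u s) + d1 s₀ u s * d1 s₀ v s * v s ∧
    d2 s₀ v s = d1 s₀ v s * d1 s₀ u s * (u s - 1 / u s) - (d1 s₀ u s) ^ 2 * v s)

open Filter Topology

section DerivOnIcc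

variable {s₀ s : ℝ} {f : ℝ → ℝ}

lemma contDiffOn_d1 (hs₀ : 0 < s₀) (hf : ContDiffOn ℝ 2 f (Icc 0 s₀)) :
    ContDiffOn ℝ 1 (d1 s₀ f) (Icc 0 s₀) :=
  hf.derivWithin (uniqueDiffOn_Icc hs₀) (by norm_num)

lemma continuousOn_d1 (hs₀ : 0 < s₀) (hf : ContDiffOn ℝ 2 f (Icc 0 s₀)) :
    ContinuousOn (d1 s₀ f) (Icc 0 s₀) :=
  (contDiffOn_d1 hs₀ hf).continuousOn

lemma continuousOn_d2 (hs₀ : 0 < s₀) (hf : ContDiffOn ℝ 2 f (Icc 0 s₀)) :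
    ContinuousOn (d2 s₀ f) (Icc 0 s₀) :=
  (contDiffOn_d1 hs₀ hf).continuousOn_derivWithin (uniqueDiffOn_Icc hs₀) le_rfl

lemma hasDerivWithinAt_d1 (hf : ContDiffOn ℝ 2 f (Icc 0 s₀)) (hs : s ∈ Icc 0 s₀) :
    HasDerivWithinAt f (d1 s₀ f s) (Icc 0 s₀) s :=
  (hf.differentiableOn (by norm_num) s hs).hasDerivWithinAt

lemma hasDerivWithinAt_d2 (hs₀ : 0 < s₀) (hf : ContDiffOn ℝ 2 f (Icc 0 s₀))
    (hs : s ∈ Icc 0 s₀) : HasDerivWithinAt (d1 s₀ f) (d2 s₀ f s) (Icc 0 s₀) s :=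
  ((contDiffOn_d1 hs₀ hf).differentiableOn one_ne_zero s hs).hasDerivWithinAt

end DerivOnIcc

theorem eqOn_zero_of_neg_mul_le_deriv {E E' : ℝ → ℝ} {b c C : ℝ}
    (hE : ContinuousOn E (Icc b c)) (hE' : ∀ x ∈ Ioo b c, HasDerivAt E (E' x) x)
    (hbound : ∀ x ∈ Ioo b c, -C * E x ≤ E' x) (hnonneg : ∀ x ∈ Icc b c, 0 ≤ E x)
    (hc : E c = 0) : EqOn E 0 (Icc b c) := by
  have hmono : MonotoneOn (fun x => E x * Real.exp (C * x)) (Icc b c) := by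
    refine monotoneOn_of_hasDerivWithinAt_nonneg (convex_Icc b c) (hE.mul (by fun_prop))
      (f' := fun x => (E' x + C * E x) * Real.exp (C * x)) ?_ ?_ <;> rw [interior_Icc]
    · intro x hx
      have hexp := (Real.hasDerivAt_exp (C * x)).comp x ((hasDerivAt_id x).const_mul C)
      exact (((hE' x hx).mul hexp).congr_deriv (by simp only [Function.comp_apply]; ring))
        |>.hasDerivWithinAt
    · exact fun x hx => mul_nonneg (by linarith [hbound x hx]) (Real.exp_pos _).le
  intro x hx
  have hle := hmono hx (right_mem_Icc.2 (hx.1.trans hx.2)) hx.2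
  simp only [hc, zero_mul] at hle
  exact le_antisymm (nonpos_of_mul_nonpos_left hle (Real.exp_pos _)) (hnonneg x hx)

/-- The energy `v² + w²` satisfies `E' ≥ -(1 + K + 2|m|) E`. -/
theorem eqOn_zero_of_linear_ode_of_right_eq_zero {v w A B : ℝ → ℝ} {b c m K : ℝ}
    (hv : ContinuousOn v (Icc b c)) (hw : ContinuousOn w (Icc b c))
    (hv' : ∀ x ∈ Ioo b c, HasDerivAt v (w x) x)
    (hw' : ∀ x ∈ Ioo b c, HasDerivAt w (A x * w x + B x * v x) x)
    (hA : ∀ x ∈ Ioo b c, m ≤ A x) (hB : ∀ x ∈ Ioo b c, |B x| ≤ K)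
    (hvc : v c = 0) (hwc : w c = 0) : EqOn v 0 (Icc b c) := by
  have hE : EqOn (fun x => v x ^ 2 + w x ^ 2) 0 (Icc b c) := by
    refine eqOn_zero_of_neg_mul_le_deriv (by fun_prop)
      (E' := fun x => 2 * v x * w x + 2 * w x * (A x * w x + B x * v x)) (C := 1 + K + 2 * |m|)
      (fun x hx => ((hv' x hx).fun_pow 2).add ((hw' x hx).fun_pow 2) |>.congr_deriv (by ring))
      (fun x hx => ?_) (fun x _ => by positivity) (by simp [hvc, hwc])
    have hvw : |2 * v x * w x| ≤ v x ^ 2 + w x ^ 2 :=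
      abs_le.2 ⟨by nlinarith [sq_nonneg (v x + w x)], by nlinarith [sq_nonneg (v x - w x)]⟩
    have hBvw : |B x * (2 * v x * w x)| ≤ K * (v x ^ 2 + w x ^ 2) := by
      rw [abs_mul]
      exact mul_le_mul (hB x hx) hvw (abs_nonneg _) ((abs_nonneg _).trans (hB x hx))
    have hAw : -|m| * w x ^ 2 ≤ A x * w x ^ 2 :=
      mul_le_mul_of_nonneg_right ((neg_abs_le m).trans (hA x hx)) (sq_nonneg _)
    nlinarith [abs_le.1 hvw, abs_le.1 hBvw, mul_nonneg (abs_nonneg m) (sq_nonneg (v x))]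
  intro x hx
  have := hE hx
  simp only [Pi.zero_apply] at this ⊢
  nlinarith [sq_nonneg (v x), sq_nonneg (w x)]

lemma exists_first_zero_of_eventually_pos {f : ℝ → ℝ} {z : ℝ} (hf : ContinuousOn f (Icc 0 z))
    (hnear : ∀ᶠ s in 𝓝[>] 0, 0 < f s) (hz : 0 < z) (hfz : f z ≤ 0) :
    ∃ s₁ ∈ Ioc 0 z, f s₁ = 0 ∧ ∀ s ∈ Ioo 0 s₁, 0 < f s := by
  obtain ⟨ε', hε'0 : 0 < ε', hε'pos⟩ := mem_nhdsGT_iff_exists_Ioo_subset.1 hnear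
  obtain ⟨ε, hε, hεε', hεz⟩ : ∃ ε, 0 < ε ∧ ε < ε' ∧ ε ≤ z :=
    ⟨min ε' z / 2, by positivity, by linarith [min_le_left ε' z, lt_min hε'0 hz],
      by linarith [min_le_right ε' z, lt_min hε'0 hz]⟩
  set S := Icc ε z ∩ f ⁻¹' Iic 0
  have hSbdd : BddBelow S := ⟨ε, fun t ht => ht.1.1⟩
  have hmem : sInf S ∈ S :=
    ((hf.mono (Icc_subset_Icc_left hε.le)).preimage_isClosed_of_isClosed isClosed_Icc
      isClosed_Iic).csInf_mem ⟨z, ⟨hεz, le_rfl⟩, hfz⟩ hSbdd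
  have hpos : ∀ s ∈ Ioo 0 (sInf S), 0 < f s := by
    intro s hs
    rcases lt_or_ge s ε with hsε | hεs
    · exact hε'pos ⟨hs.1, hsε.trans hεε'⟩
    · by_contra! hfs
      exact (csInf_le hSbdd ⟨⟨hεs, hs.2.le.trans hmem.1.2⟩, hfs⟩).not_gt hs.2
  have hs₁ : sInf S ∈ Ioc 0 z := ⟨hε.trans_le hmem.1.1, hmem.1.2⟩
  refine ⟨sInf S, hs₁, le_antisymm hmem.2 ?_, hpos⟩
  refine ContinuousWithinAt.closure_le
    (by rw [closure_Ioo hs₁.1.ne]; exact right_mem_Icc.2 hs₁.1.le) continuousWithinAt_const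
    ((hf _ (Ioc_subset_Icc_self hs₁)).mono (Ioo_subset_Icc_self.trans
      (Icc_subset_Icc_right hs₁.2))) fun s hs => (hpos s hs).le

lemma eventually_pos_of_hasDerivWithinAt_Icc {f : ℝ → ℝ} {f' s₀ : ℝ} (hs₀ : 0 < s₀)
    (hf : HasDerivWithinAt f f' (Icc 0 s₀) 0) (hf' : 0 < f') (hf0 : f 0 = 0) :
    ∀ᶠ s in 𝓝[>] 0, 0 < f s := by
  have hslope : Tendsto (slope f 0) (𝓝[>] 0) (𝓝 f') :=
    (hasDerivWithinAt_iff_tendsto_slope' (s := Ioi 0) (lt_irrefl 0)).1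
      (hf.mono_of_mem_nhdsWithin (Icc_mem_nhdsGT hs₀))
  filter_upwards [hslope.eventually_const_lt hf', self_mem_nhdsWithin] with s hslope hs
  rw [slope_def_field, hf0, sub_zero, sub_zero] at hslope
  exact (div_pos_iff_of_pos_right hs).1 hslope

section FirstZero

variable {a s₀ s₁ : ℝ} {f u v : ℝ → ℝ}

lemma Icc_mem_nhdsLT_of_mem_Ioc (hs₁ : s₁ ∈ Ioc 0 s₀) : Icc 0 s₀ ∈ 𝓝[<] s₁ :=
  mem_of_superset (Icc_mem_nhdsLT hs₁.1) (Icc_subset_Icc_right hs₁.2)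

lemma tendsto_nhdsLT_of_continuousOn_Icc (hs₁ : s₁ ∈ Ioc 0 s₀)
    (hf : ContinuousOn f (Icc 0 s₀)) : Tendsto f (𝓝[<] s₁) (𝓝 (f s₁)) :=
  (hf s₁ (Ioc_subset_Icc_self hs₁)).tendsto.mono_left
    (nhdsWithin_le_of_mem (Icc_mem_nhdsLT_of_mem_Ioc hs₁))

lemma tendsto_slope_nhdsLT_of_hasDerivWithinAt_Icc {f' : ℝ} (hs₁ : s₁ ∈ Ioc 0 s₀)
    (hf : HasDerivWithinAt f f' (Icc 0 s₀) s₁) : Tendsto (slope f s₁) (𝓝[<] s₁) (𝓝 f') :=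
  (hasDerivWithinAt_iff_tendsto_slope' (s := Iio s₁) (lt_irrefl s₁)).1
    (hf.mono_of_mem_nhdsWithin (Icc_mem_nhdsLT_of_mem_Ioc hs₁))

lemma exists_Ioo_of_eventually_nhdsLT {p : ℝ → Prop} (hs₁ : 0 < s₁)
    (h : ∀ᶠ s in 𝓝[<] s₁, p s) : ∃ b ∈ Ioo 0 s₁, ∀ s ∈ Ioo b s₁, p s := by
  obtain ⟨l, hl, hsub⟩ := mem_nhdsLT_iff_exists_Ioo_subset.1 h
  exact ⟨max l (s₁ / 2), ⟨by positivity, max_lt hl (by linarith)⟩,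
    fun s hs => hsub ⟨(le_max_left _ _).trans_lt hs.1, hs.2⟩⟩

variable (hs₀ : 0 < s₀) (hsol : IsSolS a s₀ u v) (hs₁ : s₁ ∈ Ioc 0 s₀) (hu₁ : u s₁ = 0)
  (hpos : ∀ s ∈ Ioo 0 s₁, 0 < u s)
include hsol hs₁ hu₁ hpos

include hs₀ in
lemma d1_v_eq_zero_of_first_zero : d1 s₀ v s₁ = 0 := by
  obtain ⟨hu, hv, -, -, -, -, -, hode⟩ := hsol
  have hsub : Icc 0 s₁ ⊆ Icc 0 s₀ := Icc_subset_Icc_right hs₁.2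
  have := (continuousOn_d1 hs₀ hu).mono hsub
  have := (continuousOn_d1 hs₀ hv).mono hsub
  have := (continuousOn_d2 hs₀ hu).mono hsub
  have := hu.continuousOn.mono hsub
  have := hv.continuousOn.mono hsub
  -- the `u`-equation multiplied by `u`, which extends continuously to `s₁`
  have key : EqOn (fun s => d1 s₀ v s ^ 2 * (1 - u s ^ 2))
      (fun s => u s * (d2 s₀ u s - d1 s₀ u s * d1 s₀ v s * v s)) (Icc 0 s₁) := by
    refine EqOn.of_subset_closure (s := Ioo 0 s₁) (fun s hs => ?_) (by fun_prop) (by fun_prop)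
      Ioo_subset_Icc_self (closure_Ioo hs₁.1.ne).ge
    have hus := (hpos s hs).ne'
    simp only [(hode s ⟨hs.1, hs.2.le.trans hs₁.2⟩).1]
    field_simp
    ring
  simpa [hu₁] using key (right_mem_Icc.2 hs₁.1.le)

lemma d1_u_eq_neg_one_of_first_zero (hv₁' : d1 s₀ v s₁ = 0) : d1 s₀ u s₁ = -1 := by
  obtain ⟨hu, -, -, -, -, -, harc, -⟩ := hsol
  have hsq : d1 s₀ u s₁ ^ 2 = 1 := by simpa [hv₁'] using harc s₁ (Ioc_subset_Icc_self hs₁)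
  have hle : d1 s₀ u s₁ ≤ 0 := by
    refine le_of_tendsto (tendsto_slope_nhdsLT_of_hasDerivWithinAt_Icc hs₁
      (hasDerivWithinAt_d1 hu (Ioc_subset_Icc_self hs₁))) ?_
    filter_upwards [Ioo_mem_nhdsLT hs₁.1] with s hs
    rw [slope_def_field, hu₁, sub_zero]
    exact (div_neg_of_pos_of_neg (hpos s hs) (sub_neg.2 hs.2)).le
  nlinarith

include hs₀ in
lemma v_eq_zero_of_first_zero (hv₁' : d1 s₀ v s₁ = 0) (hu₁' : d1 s₀ u s₁ = -1) : v s₁ = 0 := by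
  obtain ⟨hu, hv, -, -, -, -, -, hode⟩ := hsol
  have hs₁' := Ioc_subset_Icc_self hs₁
  -- (S) read at `s₁` itself, where `1 / u s₁ = 1 / 0 = 0`
  have hL : d2 s₀ v s₁ = -v s₁ := by simpa [hu₁, hv₁', hu₁'] using (hode s₁ hs₁).2
  have tu := tendsto_slope_nhdsLT_of_hasDerivWithinAt_Icc hs₁ (hasDerivWithinAt_d1 hu hs₁')
  have tv' := tendsto_slope_nhdsLT_of_hasDerivWithinAt_Icc hs₁ (hasDerivWithinAt_d2 hs₀ hv hs₁')
  have tu' := tendsto_nhdsLT_of_continuousOn_Icc hs₁ (continuousOn_d1 hs₀ hu)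
  have tv'' := tendsto_nhdsLT_of_continuousOn_Icc hs₁ (continuousOn_d2 hs₀ hv)
  have tu₀ := tendsto_nhdsLT_of_continuousOn_Icc hs₁ hu.continuousOn
  have tv₀ := tendsto_nhdsLT_of_continuousOn_Icc hs₁ hv.continuousOn
  -- the `v`-equation multiplied by `u / (s - s₁)`
  have heq : (fun s => slope (d1 s₀ v) s₁ s * d1 s₀ u s * u s ^ 2
      - d1 s₀ u s * slope (d1 s₀ v) s₁ s - d1 s₀ u s ^ 2 * v s * slope u s₁ s)
      =ᶠ[𝓝[<] s₁] fun s => slope u s₁ s * d2 s₀ v s := by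
    filter_upwards [Ioo_mem_nhdsLT hs₁.1] with s hs
    have hus := (hpos s hs).ne'
    have hss := (sub_neg.2 hs.2).ne
    simp only [slope_def_field, hu₁, hv₁', (hode s ⟨hs.1, hs.2.le.trans hs₁.2⟩).2]
    field_simp
    ring
  have hlim := tendsto_nhds_unique ((((tv'.mul tu').mul (tu₀.pow 2)).sub (tu'.mul tv')).sub
    (((tu'.pow 2).mul tv₀).mul tu) |>.congr' heq) (tu.mul tv'')
  rw [hu₁, hu₁', hL] at hlim
  linarith

include hs₀ in
lemma bddBelow_coeff_of_first_zero (hu₁' : d1 s₀ u s₁ = -1) {δ : ℝ} (hδ : 0 < δ) :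
    ∃ m, ∀ s ∈ Ioo δ s₁, m ≤ d1 s₀ u s * (u s - 1 / u s) := by
  obtain ⟨hu, -⟩ := hsol
  obtain ⟨b, hb, hsign⟩ : ∃ b ∈ Ioo 0 s₁, ∀ s ∈ Ioo b s₁, 0 ≤ d1 s₀ u s * (u s - 1 / u s) := by
    refine exists_Ioo_of_eventually_nhdsLT hs₁.1 ?_
    have tu' := tendsto_nhdsLT_of_continuousOn_Icc hs₁ (continuousOn_d1 hs₀ hu)
    have tu₀ := tendsto_nhdsLT_of_continuousOn_Icc hs₁ hu.continuousOn
    rw [hu₁'] at tu'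
    rw [hu₁] at tu₀
    filter_upwards [tu'.eventually_lt_const (by norm_num : (-1 : ℝ) < 0),
      tu₀.eventually_lt_const one_pos, Ioo_mem_nhdsLT hs₁.1] with s hu' hu₀ hs
    have h1u : 1 ≤ 1 / u s := (le_div_iff₀ (hpos s hs)).2 (by linarith)
    exact mul_nonneg_of_nonpos_of_nonpos hu'.le (by linarith)
  have hδb : Icc δ b ⊆ Icc 0 s₀ := Icc_subset_Icc hδ.le (hb.2.le.trans hs₁.2)
  obtain ⟨m, hm⟩ : BddBelow ((fun s => d1 s₀ u s * (u s - 1 / u s)) '' Icc δ b) :=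
    isCompact_Icc.bddBelow_image (((continuousOn_d1 hs₀ hu).mono hδb).mul
      ((hu.continuousOn.mono hδb).sub (continuousOn_const.div (hu.continuousOn.mono hδb)
      fun s hs => (hpos s ⟨hδ.trans_le hs.1, hs.2.trans_lt hb.2⟩).ne')))
  refine ⟨min m 0, fun s hs => ?_⟩
  rcases le_or_gt s b with hsb | hbs
  · exact (min_le_left _ _).trans (hm ⟨s, ⟨hs.1.le, hsb⟩, rfl⟩)
  · exact (min_le_right _ _).trans (hsign s ⟨hbs, hs.2⟩)

include hs₀ in
lemma false_of_first_zero (ha : 0 < a) : False := by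
  have hv₁' := d1_v_eq_zero_of_first_zero hs₀ hsol hs₁ hu₁ hpos
  have hu₁' := d1_u_eq_neg_one_of_first_zero hsol hs₁ hu₁ hpos hv₁'
  have hv₁ := v_eq_zero_of_first_zero hs₀ hsol hs₁ hu₁ hpos hv₁' hu₁'
  obtain ⟨δ, hvδ, hδ⟩ : ∃ δ, 0 < v δ ∧ δ ∈ Ioo 0 s₁ := by
    have hv0 : ∀ᶠ s in 𝓝[>] 0, 0 < v s :=
      ((hsol.2.1.continuousOn 0 (left_mem_Icc.2 hs₀.le)).tendsto.mono_left
        (nhdsWithin_le_of_mem (Icc_mem_nhdsGT hs₀))).eventually_const_lt (hsol.2.2.2.1 ▸ ha)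
    exact (hv0.and (Ioo_mem_nhdsGT hs₁.1 : ∀ᶠ s in 𝓝[>] 0, s ∈ Ioo 0 s₁)).exists
  obtain ⟨m, hm⟩ := bddBelow_coeff_of_first_zero hs₀ hsol hs₁ hu₁ hpos hu₁' hδ.1
  obtain ⟨-, hv, -, -, -, -, harc, hode⟩ := hsol
  have hδs₀ : Icc δ s₁ ⊆ Icc 0 s₀ := Icc_subset_Icc hδ.1.le hs₁.2
  have hinterior : ∀ s ∈ Ioo δ s₁, Icc 0 s₀ ∈ 𝓝 s := fun s hs =>
    Icc_mem_nhds (hδ.1.trans hs.1) (hs.2.trans_le hs₁.2)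
  have hvanish := eqOn_zero_of_linear_ode_of_right_eq_zero
    (A := fun s => d1 s₀ u s * (u s - 1 / u s)) (B := fun s => -d1 s₀ u s ^ 2) (K := 1)
    (hv.continuousOn.mono hδs₀) ((continuousOn_d1 hs₀ hv).mono hδs₀)
    (fun s hs => (hasDerivWithinAt_d1 hv (hδs₀ (Ioo_subset_Icc_self hs))).hasDerivAt
      (hinterior s hs))
    (fun s hs => (hasDerivWithinAt_d2 hs₀ hv (hδs₀ (Ioo_subset_Icc_self hs))).hasDerivAt
      (hinterior s hs) |>.congr_deriv (by
        rw [(hode s ⟨hδ.1.trans hs.1, hs.2.le.trans hs₁.2⟩).2]; ring))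
    hm (fun s hs => by
      have := harc s (hδs₀ (Ioo_subset_Icc_self hs))
      rw [abs_neg, abs_of_nonneg (sq_nonneg _)]; nlinarith [sq_nonneg (d1 s₀ v s)])
    hv₁ hv₁'
  exact hvδ.ne' (hvanish ⟨le_rfl, hδ.2.le⟩)

end FirstZero

lemma pos_of_isSolS {a s₀ : ℝ} {u v : ℝ → ℝ} (ha : 0 < a) (hs₀ : 0 < s₀)
    (hsol : IsSolS a s₀ u v) : ∀ s ∈ Ioc 0 s₀, 0 < u s := by
  by_contra! ⟨z, hz, huz⟩
  obtain ⟨hu, -, hu0, -, hu'0, -⟩ := id hsol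
  have hnear : ∀ᶠ s in 𝓝[>] 0, 0 < u s := eventually_pos_of_hasDerivWithinAt_Icc hs₀
    (hu'0 ▸ hasDerivWithinAt_d1 hu (left_mem_Icc.2 hs₀.le)) one_pos hu0
  obtain ⟨s₁, hs₁, hu₁, hpos⟩ := exists_first_zero_of_eventually_pos
    (hu.continuousOn.mono (Icc_subset_Icc_right hz.2)) hnear hz.1 huz
  exact false_of_first_zero hs₀ hsol ⟨hs₁.1, hs₁.2.trans hz.2⟩ hu₁ hpos ha

section Curvature

variable {a s₀ s : ℝ} {u v : ℝ → ℝ}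

/-- The closed form of `φ`: it is `u k e^{-(u² + v²)/2}`, with the curvature `k` rewritten by (S)
as `(u - 1/u) v' - u' v`. -/
noncomputable def phi (s₀ : ℝ) (u v : ℝ → ℝ) (s : ℝ) : ℝ :=
  ((u s ^ 2 - 1) * d1 s₀ v s - u s * d1 s₀ u s * v s) * Real.exp (-(u s ^ 2 + v s ^ 2) / 2)

lemma contDiffOn_phi (hs₀ : 0 < s₀) (hu : ContDiffOn ℝ 2 u (Icc 0 s₀))
    (hv : ContDiffOn ℝ 2 v (Icc 0 s₀)) : ContDiffOn ℝ 1 (phi s₀ u v) (Icc 0 s₀) := by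
  have := contDiffOn_d1 hs₀ hu
  have := contDiffOn_d1 hs₀ hv
  have := hu.of_le one_le_two
  have := hv.of_le one_le_two
  unfold phi
  fun_prop

lemma phi_zero (hsol : IsSolS a s₀ u v) : phi s₀ u v 0 = 0 := by
  simp [phi, hsol.2.2.1, hsol.2.2.2.2.2.1]

lemma hasDerivWithinAt_phi (hs₀ : 0 < s₀) (hsol : IsSolS a s₀ u v) (hs : s ∈ Ioc 0 s₀)
    (hus : u s ≠ 0) :
    HasDerivWithinAt (phi s₀ u v)
      (Real.exp (-(u s ^ 2 + v s ^ 2) / 2) * (d1 s₀ u s * d1 s₀ v s / u s)) (Icc 0 s₀) s := by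
  obtain ⟨hu, hv, -, -, -, -, -, hode⟩ := hsol
  have hs' := Ioc_subset_Icc_self hs
  have hu' := hasDerivWithinAt_d1 hu hs'
  have hv' := hasDerivWithinAt_d1 hv hs'
  have hu'' := hasDerivWithinAt_d2 hs₀ hu hs'
  have hv'' := hasDerivWithinAt_d2 hs₀ hv hs'
  have hexp := (Real.hasDerivAt_exp _).comp_hasDerivWithinAt s
    (((hu'.fun_pow 2).add (hv'.fun_pow 2)).neg.div_const 2)
  refine (((((hu'.fun_pow 2).sub_const 1).mul hv'').sub ((hu'.mul hu'').mul hv')).mul hexp)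
    |>.congr_deriv ?_
  simp only [Function.comp_apply, Pi.mul_apply, Pi.sub_apply, Pi.add_apply, Pi.neg_apply,
    (hode s hs).1, (hode s hs).2]
  field_simp
  ring

lemma continuousOn_d1_phi (hs₀ : 0 < s₀) (hsol : IsSolS a s₀ u v) :
    ContinuousOn (d1 s₀ (phi s₀ u v)) (Icc 0 s₀) :=
  (contDiffOn_phi hs₀ hsol.1 hsol.2.1).continuousOn_derivWithin (uniqueDiffOn_Icc hs₀) le_rfl

lemma d1_phi_eq (hs₀ : 0 < s₀) (hsol : IsSolS a s₀ u v) (hu₀ : ∀ t ∈ Ioc 0 s₀, u t ≠ 0) :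
    ∀ t ∈ Ioc 0 s₀, d1 s₀ (phi s₀ u v) t
      = Real.exp (-(u t ^ 2 + v t ^ 2) / 2) * (d1 s₀ u t * d1 s₀ v t / u t) := fun t ht =>
  (hasDerivWithinAt_phi hs₀ hsol ht (hu₀ t ht)).derivWithin
    (uniqueDiffOn_Icc hs₀ t (Ioc_subset_Icc_self ht))

lemma integral_eq_phi (hs₀ : 0 < s₀) (hsol : IsSolS a s₀ u v)
    (hu₀ : ∀ t ∈ Ioc 0 s₀, u t ≠ 0) (hs : s ∈ Ioc 0 s₀) :
    ∫ t in (0:ℝ)..s, Real.exp (-(u t ^ 2 + v t ^ 2) / 2) * (d1 s₀ u t * d1 s₀ v t / u t)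
      = phi s₀ u v s := by
  have hsub : Icc 0 s ⊆ Icc 0 s₀ := Icc_subset_Icc_right hs.2
  have hint : IntervalIntegrable
      (fun t => Real.exp (-(u t ^ 2 + v t ^ 2) / 2) * (d1 s₀ u t * d1 s₀ v t / u t))
      MeasureTheory.volume 0 s := by
    refine (((continuousOn_d1_phi hs₀ hsol).mono hsub).intervalIntegrable_of_Icc hs.1.le).congr
      fun t ht => ?_
    rw [uIoc_of_le hs.1.le] at ht
    exact d1_phi_eq hs₀ hsol hu₀ t ⟨ht.1, ht.2.trans hs.2⟩
  rw [intervalIntegral.integral_eq_sub_of_hasDeriv_right_of_le hs.1.le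
    ((contDiffOn_phi hs₀ hsol.1 hsol.2.1).continuousOn.mono hsub) (fun t ht => ?_) hint,
    phi_zero hsol, sub_zero]
  have ht : t ∈ Ioc 0 s₀ := ⟨ht.1, ht.2.le.trans hs.2⟩
  exact ((hasDerivWithinAt_phi hs₀ hsol ht (hu₀ t ht)).hasDerivAt
    (Icc_mem_nhds ht.1 (‹t ∈ Ioo 0 s›.2.trans_le hs.2))).hasDerivWithinAt

lemma curvature_eq_phi (hsol : IsSolS a s₀ u v) (hs : s ∈ Ioc 0 s₀) (hus : u s ≠ 0) :
    -(d1 s₀ v s) * d2 s₀ u s + d1 s₀ u s * d2 s₀ v s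
      = phi s₀ u v s * Real.exp ((u s ^ 2 + v s ^ 2) / 2) / u s := by
  obtain ⟨-, -, -, -, -, -, harc, hode⟩ := hsol
  rw [phi, mul_assoc, ← Real.exp_add, neg_div, neg_add_cancel, Real.exp_zero, mul_one,
    (hode s hs).1, (hode s hs).2]
  field_simp
  linear_combination ((u s ^ 2 - 1) * d1 s₀ v s - u s * d1 s₀ u s * v s)
    * harc s (Ioc_subset_Icc_self hs)

end Curvature

/-- Along any solution of (S) with the given initial data, the integrand
`t ↦ e^{-(u²+v²)/2} u'v'/u` extends continuously to `t = 0`, and the curvature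
`k = -v'u'' + u'v''` satisfies `k(s) = φ(s) e^{(u²+v²)/2}/u(s)` where
`φ(s) = ∫₀ˢ e^{-(u²+v²)/2} u'v'/u dt`. -/
theorem curvature_integral_formula (a s₀ : ℝ) (ha : 0 < a) (hs₀ : 0 < s₀)
    (u v : ℝ → ℝ) (hsol : IsSolS a s₀ u v) :
    (∃ G : ℝ → ℝ, ContinuousOn G (Icc 0 s₀) ∧
      ∀ t ∈ Ioc (0:ℝ) s₀,
        G t = Real.exp (-(u t ^ 2 + v t ^ 2) / 2) * (d1 s₀ u t * d1 s₀ v t / u t)) ∧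
    ∀ s ∈ Ioc (0:ℝ) s₀,
      -(d1 s₀ v s) * d2 s₀ u s + d1 s₀ u s * d2 s₀ v s
        = (∫ t in (0:ℝ)..s,
            Real.exp (-(u t ^ 2 + v t ^ 2) / 2) * (d1 s₀ u t * d1 s₀ v t / u t))
          * Real.exp ((u s ^ 2 + v s ^ 2) / 2) / u s := by
  have hu₀ : ∀ t ∈ Ioc (0:ℝ) s₀, u t ≠ 0 := fun t ht => (pos_of_isSolS ha hs₀ hsol t ht).ne'
  refine ⟨⟨d1 s₀ (phi s₀ u v), continuousOn_d1_phi hs₀ hsol, d1_phi_eq hs₀ hsol hu₀⟩,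
    fun s hs => ?_⟩
  rw [integral_eq_phi hs₀ hsol hu₀ hs, curvature_eq_phi hsol hs (hu₀ s hs)]
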